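/- arXiv:1609.03635 — 2 statements merged into one kernel-verified Lean document; each statement's English description precedes it below -/
import Mathlib

section
/- Under Assumption A with Alg(T; R_K M) semi-admissible, if the forgetful functor U preserves right Bousfield localization (every T(K)-colocal equivalence with T(K)-colocal domain is sent to a K-colocal equivalence with K-colocal domain), then for each T-algebra X the cofibrant replacement R_{T(K)}X → X in R_{T(K)} Alg(T;M) exhibits a T-algebra X̃ = R_{T(K)}X such that U(X̃) is weakly equivalent in M to R_K U X; the weak equivalence is obtained as a lift β : U R_{T(K)}X → R_K U X of Uc_X through the trivial fibration q : R_K U X → U X in R_K M, and β is a weak equivalence in M by 2-out-of-3 and the fact that K-colocal equivalences between K-colocal objects are M-weak equivalences. -/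
open CategoryTheory CategoryTheory.Limits

universe w v u

/-- A (semi-)model structure datum: three classes of maps, with the weak
equivalences satisfying 2-out-of-3, cofibrations characterized by the left
lifting property against trivial fibrations, trivial cofibrations lifting
against fibrations, and the two factorization axioms. -/
structure ModelStr (M : Type u) [Category.{v} M] where
  W : MorphismProperty M
  Fib : MorphismProperty M
  Cof : MorphismProperty M
  w_comp : ∀ {X Y Z : M} (f : X ⟶ Y) (g : Y ⟶ Z), W f → W g → W (f ≫ g)
  w_cancel_left : ∀ {X Y Z : M} (f : X ⟶ Y) (g : Y ⟶ Z), W g → W (f ≫ g) → W f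
  w_cancel_right : ∀ {X Y Z : M} (f : X ⟶ Y) (g : Y ⟶ Z), W f → W (f ≫ g) → W g
  cof_iff : ∀ {A B : M} (i : A ⟶ B), Cof i ↔
    ∀ {X Y : M} (p : X ⟶ Y), Fib p → W p → HasLiftingProperty i p
  tcof_llp : ∀ {A B X Y : M} (i : A ⟶ B) (p : X ⟶ Y),
    Cof i → W i → Fib p → HasLiftingProperty i p
  fact_cof_tfib : ∀ {X Y : M} (f : X ⟶ Y),
    ∃ (Z : M) (i : X ⟶ Z) (p : Z ⟶ Y), Cof i ∧ Fib p ∧ W p ∧ i ≫ p = f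
  fact_tcof_fib : ∀ {X Y : M} (f : X ⟶ Y),
    ∃ (Z : M) (i : X ⟶ Z) (p : Z ⟶ Y), Cof i ∧ W i ∧ Fib p ∧ i ≫ p = f

/-- An object is cofibrant if the map from the initial object is a cofibration. -/
def ModelStr.Cofibrant {M : Type u} [Category.{v} M] [HasInitial M]
    (S : ModelStr M) (X : M) : Prop := S.Cof (initial.to X)

/-- An object is fibrant if the map to the terminal object is a fibration. -/
def ModelStr.Fibrant {M : Type u} [Category.{v} M] [HasTerminal M]
    (S : ModelStr M) (X : M) : Prop := S.Fib (terminal.from X)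

namespace ModelStr

variable {M : Type u} [Category.{v} M] [HasInitial M] (S : ModelStr M)

theorem exists_lift_of_cofibrant {A Y Z : M} (hA : S.Cofibrant A) {p : Y ⟶ Z}
    (hp : S.Fib p) (hpw : S.W p) (f : A ⟶ Z) : ∃ g : A ⟶ Y, g ≫ p = f := by
  have : HasLiftingProperty (initial.to A) p := (S.cof_iff _).1 hA p hp hpw
  have sq : CommSq (initial.to Y) (initial.to A) p f := ⟨initial.hom_ext _ _⟩
  exact ⟨sq.lift, sq.fac_right⟩

end ModelStr

theorem rk_preserves_algebras_of_forget_preserves_general {M : Type u}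
    [Category.{v} M] [HasInitial M] (T : Monad M) [HasInitial T.Algebra]
    (SM : ModelStr M)  -- the model structure on M
    (SR : ModelStr M)  -- the right Bousfield localization R_K M
    (SAR : ModelStr T.Algebra)  -- Alg(T; R_K M) = R_{T(K)} Alg(T;M)
    -- U preserves right Bousfield localization
    (hU : ∀ {X' X : T.Algebra} (c : X' ⟶ X), SAR.W c → SAR.Cofibrant X' →
      SR.W c.f ∧ SR.Cofibrant X'.A)
    -- cofibrant replacement in R_{T(K)} Alg(T;M)
    (RTK : T.Algebra → T.Algebra) (cX : ∀ X : T.Algebra, RTK X ⟶ X)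
    (hRTKc : ∀ X, SAR.Cofibrant (RTK X))
    (hRTKw : ∀ X, SAR.W (cX X))
    -- functorial cofibrant replacement in R_K M
    (RK : M → M) (q : ∀ A : M, RK A ⟶ A)
    (hRKc : ∀ A, SR.Cofibrant (RK A))
    (hRKf : ∀ A, SR.Fib (q A)) (hRKw : ∀ A, SR.W (q A))
    -- a K-colocal equivalence between K-colocal objects is a weak equivalence in M
    (hHirsch : ∀ {A B : M} (f : A ⟶ B),
      SR.W f → SR.Cofibrant A → SR.Cofibrant B → SM.W f)
    (X : T.Algebra) :
    ∃ β : (RTK X).A ⟶ RK X.A, β ≫ q X.A = (cX X).f ∧ SM.W β := by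
  obtain ⟨hWc, hCof⟩ := hU (cX X) (hRTKw X) (hRTKc X)
  obtain ⟨β, hβ⟩ := SR.exists_lift_of_cofibrant hCof (hRKf X.A) (hRKw X.A) (cX X).f
  have hWβ : SR.W β := SR.w_cancel_left β (q X.A) (hRKw X.A) (hβ ▸ hWc)
  exact ⟨β, hβ, hHirsch β hWβ hCof (hRKc X.A)⟩

/-- if the forgetful functor preserves right Bousfield
localization (every `T(K)`-colocal equivalence with `T(K)`-colocal domain is
sent to a `K`-colocal equivalence with `K`-colocal domain), then for each
`T`-algebra `X` the cofibrant replacement `c_X : R_{T(K)}X → X` in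
`R_{T(K)} Alg(T;M)` gives a `T`-algebra `X̃ = R_{T(K)}X` whose underlying
object is weakly equivalent in `M` to `R_K U X`: `U c_X` lifts through the
trivial fibration `q : R_K U X → U X` to a map `β` which is a weak
equivalence in `M`. -/
theorem rk_preserves_algebras_of_forget_preserves {M : Type u}
    [Category.{v} M] [HasInitial M] (T : Monad M) [HasInitial T.Algebra]
    (SM : ModelStr M)  -- the model structure on M
    (SR : ModelStr M)  -- the right Bousfield localization R_K M
    (hFibR : SR.Fib = SM.Fib)
    (SA : ModelStr T.Algebra)   -- Alg(T;M), transferred from M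
    (hWA : ∀ {A B : T.Algebra} (f : A ⟶ B), SA.W f ↔ SM.W f.f)
    (hFibA : ∀ {A B : T.Algebra} (f : A ⟶ B), SA.Fib f ↔ SM.Fib f.f)
    (SAR : ModelStr T.Algebra)  -- Alg(T; R_K M) = R_{T(K)} Alg(T;M)
    (hWAR : ∀ {A B : T.Algebra} (f : A ⟶ B), SAR.W f ↔ SR.W f.f)
    (hFibAR : ∀ {A B : T.Algebra} (f : A ⟶ B), SAR.Fib f ↔ SR.Fib f.f)
    -- U preserves right Bousfield localization
    (hU : ∀ {X' X : T.Algebra} (c : X' ⟶ X), SAR.W c → SAR.Cofibrant X' →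
      SR.W c.f ∧ SR.Cofibrant X'.A)
    -- cofibrant replacement in R_{T(K)} Alg(T;M)
    (RTK : T.Algebra → T.Algebra) (cX : ∀ X : T.Algebra, RTK X ⟶ X)
    (hRTKc : ∀ X, SAR.Cofibrant (RTK X))
    (hRTKf : ∀ X, SAR.Fib (cX X)) (hRTKw : ∀ X, SAR.W (cX X))
    -- functorial cofibrant replacement in R_K M
    (RK : M → M) (q : ∀ A : M, RK A ⟶ A)
    (hRKc : ∀ A, SR.Cofibrant (RK A))
    (hRKf : ∀ A, SR.Fib (q A)) (hRKw : ∀ A, SR.W (q A))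
    -- a K-colocal equivalence between K-colocal objects is a weak equivalence in M
    (hHirsch : ∀ {A B : M} (f : A ⟶ B),
      SR.W f → SR.Cofibrant A → SR.Cofibrant B → SM.W f)
    (X : T.Algebra) :
    ∃ β : (RTK X).A ⟶ RK X.A, β ≫ q X.A = (cX X).f ∧ SM.W β :=
  rk_preserves_algebras_of_forget_preserves_general T SM SR SAR hU RTK cX hRTKc hRTKw RK q hRKc hRKf
    hRKw hHirsch X
end

section
/- An object that is a finite colimit of objects each finite with respect to a saturated class C of maps (i.e., the corepresentable functors commute with transfinite compositions of maps in C) is itself finite with respect to C. -/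
open CategoryTheory CategoryTheory.Limits

universe v u

variable {M : Type u} [Category.{v} M]

/-- A class of maps is saturated if it is closed under retracts, pushouts
(cobase change), and transfinite compositions. -/
def SaturatedClass (Cs : MorphismProperty M) : Prop :=
  (∀ {A B X Y : M} (f : A ⟶ B) (g : X ⟶ Y)
      (i : A ⟶ X) (r : X ⟶ A) (j : B ⟶ Y) (s : Y ⟶ B),
      i ≫ r = 𝟙 A → j ≫ s = 𝟙 B → f ≫ j = i ≫ g → g ≫ s = r ≫ f →
      Cs g → Cs f) ∧
  (∀ {Z X Y P : M} (f : Z ⟶ X) (g : Z ⟶ Y) (inl : X ⟶ P) (inr : Y ⟶ P),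
      IsPushout f g inl inr → Cs f → Cs inr) ∧
  (∀ (J : Type v) [LinearOrder J] [OrderBot J] (F : J ⥤ M) (c : Cocone F),
      IsColimit c → (∀ (i j : J) (h : i ≤ j), Cs (F.map (homOfLE h))) →
      Cs (c.ι.app ⊥))

/-- An object `X` is finite with respect to a class `Cs` of maps if the
corepresentable functor `Hom(X, -)` sends colimits of (transfinite) chains of
maps in `Cs` to colimits, i.e. maps out of `X` into such a colimit factor
through some stage, compatibly. -/
def CFinite (Cs : MorphismProperty M) (X : M) : Prop :=
  ∀ (J : Type v) [LinearOrder J] [OrderBot J] (F : J ⥤ M) (c : Cocone F),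
    IsColimit c → (∀ (i j : J) (h : i ≤ j), Cs (F.map (homOfLE h))) →
    Nonempty (IsColimit ((coyoneda.obj (Opposite.op X)).mapCocone c))

open Opposite Cardinal

/-- `Hom(c.pt, -)` is the finite limit of the functors `Hom(F.obj k, -)`, and finite limits
commute with filtered colimits of types (the case `κ = ℵ₀` of
`Functor.Accessible.Limits.isColimitMapCocone`). -/
noncomputable def isColimitCoyonedaMapCoconeOfIsColimit
    {K : Type*} [SmallCategory K] [FinCategory K] {F : K ⥤ M} {c : Cocone F} (hc : IsColimit c)
    {J : Type v} [SmallCategory J] [IsFiltered J] {G : J ⥤ M} (c' : Cocone G)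
    (h : ∀ k, IsColimit ((coyoneda.obj (op (F.obj k))).mapCocone c')) :
    IsColimit ((coyoneda.obj (op c.pt)).mapCocone c') :=
  haveI : Fact (Cardinal.aleph0.{v}.IsRegular) := fact_isRegular_aleph0
  haveI : IsCardinalFiltered J ℵ₀ := (isCardinalFiltered_aleph0_iff J).2 inferInstance
  Functor.Accessible.Limits.isColimitMapCocone (coyoneda.mapCone c.op)
    (fun X => isLimitOfPreserves ((evaluation _ _).obj X) (isLimitOfPreserves coyoneda hc.op)) ℵ₀
    ((hasCardinalLT_aleph0_iff _).2 inferInstance) c' (fun k => h (unop k))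

theorem cFinite_of_finite_colimit_general (Cs : MorphismProperty M)
    (J : Type) [SmallCategory J] [FinCategory J]
    (F : J ⥤ M) (c : Cocone F) (hc : IsColimit c)
    (hfin : ∀ j : J, CFinite Cs (F.obj j)) : CFinite Cs c.pt :=
  fun J' _ _ G c' hc' hCs =>
    ⟨isColimitCoyonedaMapCoconeOfIsColimit hc c' fun j => (hfin j J' G c' hc' hCs).some⟩

/-- a finite colimit of objects, each finite with respect to a
saturated class `Cs`, is itself finite with respect to `Cs`. -/
theorem cFinite_of_finite_colimit (Cs : MorphismProperty M)
    (hsat : SaturatedClass Cs)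
    (J : Type) [SmallCategory J] [FinCategory J]
    (F : J ⥤ M) (c : Cocone F) (hc : IsColimit c)
    (hfin : ∀ j : J, CFinite Cs (F.obj j)) : CFinite Cs c.pt :=
  cFinite_of_finite_colimit_general Cs J F c hc hfin
end
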